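/- arXiv:2209.12336 — 2 statements merged into one kernel-verified Lean document; each statement's English description precedes it below -/
import Mathlib

section
/- Let X be a set of states, let V̂ : X → ℝ be a learned value function and J : X → ℝ a cost function satisfying J(x) ≤ V(x) for all x, where V is the true value function. Define δ = sup{V̂(x) : x ∈ X, J(x) ≤ 0} and the recovered safe set S̃ = {x ∈ X : V̂(x) > δ}. Then every x ∈ S̃ satisfies V(x) > 0, i.e., S̃ is contained in the complement of the backward reachable tube BRT = {x ∈ X : V(x) ≤ 0}. -/
theorem recovered_safe_set_subset_BRT_compl_general
    {X : Type*}
    (Vhat J V : X → ℝ)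
    (hJV : ∀ x, J x ≤ V x)
    (hbdd : BddAbove (Vhat '' {x | J x ≤ 0})) :
    {x | Vhat x > sSup (Vhat '' {x | J x ≤ 0})} ⊆ {x | V x > 0} := by
  intro x hx
  have hJ : ¬ J x ≤ 0 := fun hJ => notMem_of_csSup_lt hx hbdd (Set.mem_image_of_mem Vhat hJ)
  exact (not_le.mp hJ).trans_le (hJV x)

/-- If `J ≤ V` pointwise and `δ = sSup (V̂ '' {x | J x ≤ 0})`
(nonempty, bounded above), then every state in the recovered safe set
`{x | V̂ x > δ}` satisfies `V x > 0`, i.e. lies outside the BRT. -/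
theorem recovered_safe_set_subset_BRT_compl
    {X : Type*} [Nonempty X]
    (Vhat J V : X → ℝ)
    (hJV : ∀ x, J x ≤ V x)
    (hne : ∃ x, J x ≤ 0)
    (hbdd : BddAbove (Vhat '' {x | J x ≤ 0})) :
    {x | Vhat x > sSup (Vhat '' {x | J x ≤ 0})} ⊆ {x | V x > 0} :=
  recovered_safe_set_subset_BRT_compl_general Vhat J V hJV hbdd
end

section
/- Let ε, β ∈ (0,1) and let N be a natural number with N ≥ (2/ε)(ln(1/β) + 1). Then (choosing d = 1 in the standard scenario-optimization bound) the binomial tail bound holds: C(N, 0)·(1−ε)^N + C(N, 1)·ε·(1−ε)^(N−1) ≤ β is implied; in particular N·ε·(1−ε)^(N−1) + (1−ε)^N ≤ β. -/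
/-! With `t = (N - 1) ε`, the two binomial terms factor as `(1 + t) (1 - ε)^(N-1)`, which is at
most `(1 + t) e^{-t}`. Since `2x ≤ eˣ`, this is at most `e^{(1-t)/2}`, and the sample size makes
`(1 - t)/2 ≤ log β`. -/

open Real

lemma one_add_mul_exp_neg_le (t : ℝ) : (1 + t) * exp (-t) ≤ exp ((1 - t) / 2) :=
  calc (1 + t) * exp (-t) ≤ exp ((1 + t) / 2) * exp (-t) := by
        gcongr
        linarith [two_mul_le_exp (x := (1 + t) / 2)]
    _ = exp ((1 - t) / 2) := by rw [← exp_add]; ring_nf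

lemma one_sub_pow_le_exp_neg_mul {ε : ℝ} (hε : ε ≤ 1) (n : ℕ) :
    (1 - ε) ^ n ≤ exp (-(n * ε)) :=
  calc (1 - ε) ^ n ≤ exp (-ε) ^ n := by
        gcongr
        exact one_sub_le_exp_neg ε
    _ = exp (-(n * ε)) := by rw [← exp_nat_mul]; ring_nf

/-- Also correct for `N = 0`, where `N - 1` truncates to `0`. -/
lemma mul_one_sub_pow_pred_add_one_sub_pow (ε : ℝ) (N : ℕ) :
    N * ε * (1 - ε) ^ (N - 1) + (1 - ε) ^ N = (1 + (N - 1 : ℕ) * ε) * (1 - ε) ^ (N - 1) := by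
  cases N with
  | zero => simp
  | succ n => simp only [Nat.add_sub_cancel, Nat.cast_succ]; ring

lemma mul_one_sub_pow_pred_add_one_sub_pow_le {ε : ℝ} (hε : 0 ≤ ε) (hε1 : ε ≤ 1) (N : ℕ) :
    N * ε * (1 - ε) ^ (N - 1) + (1 - ε) ^ N ≤ exp ((1 - (N - 1) * ε) / 2) := by
  set t : ℝ := (N - 1 : ℕ) * ε
  have ht : (N - 1) * ε ≤ t := by
    refine mul_le_mul_of_nonneg_right ?_ hε
    rw [sub_le_iff_le_add, ← Nat.cast_add_one, Nat.cast_le]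
    omega
  calc N * ε * (1 - ε) ^ (N - 1) + (1 - ε) ^ N = (1 + t) * (1 - ε) ^ (N - 1) :=
        mul_one_sub_pow_pred_add_one_sub_pow ε N
    _ ≤ (1 + t) * exp (-t) := by
        gcongr
        exact one_sub_pow_le_exp_neg_mul hε1 _
    _ ≤ exp ((1 - t) / 2) := one_add_mul_exp_neg_le t
    _ ≤ exp ((1 - (N - 1) * ε) / 2) := by gcongr

theorem scenario_sample_complexity_general
    (ε β : ℝ) (hε : 0 < ε) (hε1 : ε < 1) (hβ : 0 < β)
    (N : ℕ) (hN : (2 / ε) * (Real.log (1 / β) + 1) ≤ (N : ℝ)) :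
    (N.choose 0 : ℝ) * (1 - ε) ^ N
      + (N.choose 1 : ℝ) * ε * (1 - ε) ^ (N - 1) ≤ β ∧
    (N : ℝ) * ε * (1 - ε) ^ (N - 1) + (1 - ε) ^ N ≤ β := by
  have hNε : 2 * (log (1 / β) + 1) ≤ N * ε := by
    rwa [div_mul_eq_mul_div, div_le_iff₀ hε] at hN
  have hbound : N * ε * (1 - ε) ^ (N - 1) + (1 - ε) ^ N ≤ β :=
    calc N * ε * (1 - ε) ^ (N - 1) + (1 - ε) ^ N ≤ exp ((1 - (N - 1) * ε) / 2) :=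
          mul_one_sub_pow_pred_add_one_sub_pow_le hε.le hε1.le N
      _ ≤ exp (log β) := by
          rw [one_div, log_inv] at hNε
          gcongr
          linarith
      _ = β := exp_log hβ
  simp only [Nat.choose_zero_right, Nat.choose_one_right, Nat.cast_one, one_mul]
  exact ⟨by linarith, hbound⟩

/-- sample-complexity bound for scenario optimization with one
decision variable: if `N ≥ (2/ε)(ln(1/β) + 1)` with `ε, β ∈ (0,1)`, then the
binomial tail bound `C(N,0)(1-ε)^N + C(N,1) ε (1-ε)^(N-1) ≤ β` holds; in
particular `N ε (1-ε)^(N-1) + (1-ε)^N ≤ β`. -/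
theorem scenario_sample_complexity
    (ε β : ℝ) (hε : 0 < ε) (hε1 : ε < 1) (hβ : 0 < β) (hβ1 : β < 1)
    (N : ℕ) (hN : (2 / ε) * (Real.log (1 / β) + 1) ≤ (N : ℝ)) :
    (N.choose 0 : ℝ) * (1 - ε) ^ N
      + (N.choose 1 : ℝ) * ε * (1 - ε) ^ (N - 1) ≤ β ∧
    (N : ℝ) * ε * (1 - ε) ^ (N - 1) + (1 - ε) ^ N ≤ β :=
  scenario_sample_complexity_general ε β hε hε1 hβ N hN
end
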